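/- Positive time flow of non-commutative Laurent bi-orthogonal polynomials (Proposition 4.10): let D : R → R satisfy D(a + b) = D(a) + D(b) and D(a·b) = D(a)·b + a·D(b) for all a, b ∈ R, and suppose D(m(j)) = m(j+1) for every j ∈ ℤ. Then for every n ≥ 1, assuming all Toeplitz matrices T and all quasi-determinants H, G occurring below are invertible (resp. nonzero), applying D to each coefficient of the Laurent polynomial (Q_n^{(0)})* yields the Laurent polynomial (Q_{n−1}^{(0)})*·η_n, where η_n := −ξ_{n−1}·(ψ_n^{(0)})⁻¹ and ξ_{n−1} := ψ_{n−1}^{(0)} − φ_{n−1}^{(−1)}; i.e. for every r, D of the coefficient of z^{−r} in (Q_n^{(0)})* equals the coefficient of z^{−r} in (Q_{n−1}^{(0)})*·η_n. -/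

import Mathlib

/-- The `n × n` shifted Toeplitz matrix `T_n^{(k)} = (m(k + i − j))_{i,j=0}^{n−1}`. -/
noncomputable def Tmat {R : Type*} [DivisionRing R] (m : ℤ → R) (k : ℤ) (n : ℕ) :
    Matrix (Fin n) (Fin n) R :=
  Matrix.of fun i j => m (k + (i.val : ℤ) - (j.val : ℤ))

/-- The Laurent polynomial `(Q_n^{(k)})*(z) = z^{−n} − Σ_{i=0}^{n−1} c_i z^{−i}`, where
`(c_0, …, c_{n−1})ᵀ = (T_n^{(k)})⁻¹·(m(k−n), …, m(k−1))ᵀ`, given as the coefficient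
function `ℤ → R` (the value at `e` is the coefficient of `z^e`). -/
noncomputable def Qs {R : Type*} [DivisionRing R] (m : ℤ → R) (k : ℤ) (n : ℕ) :
    ℤ → R := fun e =>
  if e = -(n : ℤ) then 1
  else if he : -(n : ℤ) < e ∧ e ≤ 0 then
    -(∑ j : Fin n, Ring.inverse (Tmat m k n) ⟨(-e).toNat, by omega⟩ j *
      m (k - (n : ℤ) + (j.val : ℤ)))
  else 0

/-- The quasi-determinant
`H_n^{(k)} = m(k) − (m(k+n), …, m(k+1))·(T_n^{(k)})⁻¹·(m(k−n), …, m(k−1))ᵀ`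
(with `H_0^{(k)} = m(k)`). -/
noncomputable def Hq {R : Type*} [DivisionRing R] (m : ℤ → R) (n : ℕ) (k : ℤ) : R :=
  m k - ∑ j : Fin n, ∑ l : Fin n,
    m (k + (n : ℤ) - (j.val : ℤ)) * Ring.inverse (Tmat m k n) j l *
      m (k - (n : ℤ) + (l.val : ℤ))

/-- The quasi-determinant
`G_n^{(k)} = m(k−n) − (m(k), …, m(k−n+1))·(T_n^{(k+1)})⁻¹·(m(k+1−n), …, m(k))ᵀ`
(with `G_0^{(k)} = m(k)`). -/
noncomputable def Gq {R : Type*} [DivisionRing R] (m : ℤ → R) (n : ℕ) (k : ℤ) : R :=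
  m (k - (n : ℤ)) - ∑ j : Fin n, ∑ l : Fin n,
    m (k - (j.val : ℤ)) * Ring.inverse (Tmat m (k + 1) n) j l *
      m (k + 1 - (n : ℤ) + (l.val : ℤ))

/-- `ψ_n^{(k)} = (H_n^{(k)})⁻¹·H_n^{(k−1)}`. -/
noncomputable def psi {R : Type*} [DivisionRing R] (m : ℤ → R) (n : ℕ) (k : ℤ) : R :=
  (Hq m n k)⁻¹ * Hq m n (k - 1)

/-- `φ_n^{(k)} = (G_n^{(k)})⁻¹·G_n^{(k−1)}`. -/
noncomputable def phi {R : Type*} [DivisionRing R] (m : ℤ → R) (n : ℕ) (k : ℤ) : R :=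
  (Gq m n k)⁻¹ * Gq m n (k - 1)

/-!
Write `q` for the coefficient vector of `(Q_n^{(k)})*`, so that `T_{n+1}^{(k)} q = H_n^{(k)} e_n`
with `q_n = 1`. Since `D` maps `T^{(k)}` to `T^{(k+1)}`, whose rows are those of `T^{(k)}`
shifted by one, differentiating this system for `Q_{n+1}` shows that `D q` (with its last entry
`D 1 = 0` dropped) solves `T_{n+1}^{(k)} x = -H_{n+1}^{(k)} e_n`. Comparing with the system for
`Q_n` gives `D (Q_{n+1}^{(k)})* = (Q_n^{(k)})* (H_n^{(k)})⁻¹ (-H_{n+1}^{(k)})`.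

It remains to identify this multiplier with `η`, which amounts to the quasi-determinant identity
`H_{n+1}^{(k-1)} = H_n^{(k-1)} - H_n^{(k)} (G_n^{(k-1)})⁻¹ G_n^{(k-2)}`. Padding the coefficient
vectors of `Q_n^{(k-1)}` and `Q_n^{(k)}` by a zero in front resp. at the end, the bordered matrix
`A = T_{n+2}^{(k-1)}` maps them to `(G_n^{(k-2)}, H_n^{(k-1)} e_n)` resp.
`(G_n^{(k-1)}, H_n^{(k)} e_n)`. Pairing both with the left null vector `h` of the first `n + 1`
columns of `A`, normalised by `h A = H_{n+1}^{(k-1)} e_{n+1}`, gives two linear equations in `h_0`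
whose elimination is the identity.
-/

open Matrix

theorem eq_mul_of_mulVec_eq_single {R ι : Type*} [DivisionRing R] [Fintype ι] [DecidableEq ι]
    {T : Matrix ι ι R} (hT : IsUnit T) {x y : ι → R} {i : ι} {a b : R}
    (hx : T *ᵥ x = Pi.single i a) (hy : T *ᵥ y = Pi.single i b) (hb : b ≠ 0) (j : ι) :
    x j = y j * (b⁻¹ * a) := by
  have hsolve : ∀ v : ι → R, v = Ring.inverse T *ᵥ (T *ᵥ v) := fun v => by
    rw [mulVec_mulVec, Ring.inverse_mul_cancel _ hT, one_mulVec]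
  rw [hsolve x, hsolve y, hx, hy]
  simp [mulVec_single, mul_assoc, mul_inv_cancel_left₀ hb]

theorem map_one_of_leibniz {R : Type*} [Ring R] (D : R →+ R)
    (hD : ∀ a b, D (a * b) = D a * b + a * D b) : D 1 = 0 := by
  simpa using hD 1 1

theorem map_mulVec_of_leibniz {R ι κ : Type*} [NonUnitalNonAssocSemiring R] [Fintype κ]
    (D : R →+ R) (hD : ∀ a b, D (a * b) = D a * b + a * D b)
    (M : Matrix ι κ R) (v : κ → R) (i : ι) :
    D ((M *ᵥ v) i) = (M.map D *ᵥ v) i + (M *ᵥ fun j => D (v j)) i := by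
  simp [mulVec, dotProduct, map_sum, hD, Finset.sum_add_distrib]

section Toeplitz

variable {R : Type*} [DivisionRing R] (m : ℤ → R) (k : ℤ) (n : ℕ)

theorem Tmat_apply (i j : Fin n) : Tmat m k n i j = m (k + i - j) := rfl

variable {n}

theorem Tmat_mulVec_snoc_zero_castSucc (v : Fin n → R) (i : Fin n) :
    (Tmat m k (n + 1) *ᵥ Fin.snoc v 0) i.castSucc = (Tmat m k n *ᵥ v) i := by
  simp [mulVec, dotProduct, Fin.sum_univ_castSucc, Tmat_apply]

theorem Tmat_mulVec_snoc_zero_succ (v : Fin n → R) (i : Fin n) :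
    (Tmat m (k - 1) (n + 1) *ᵥ Fin.snoc v 0) i.succ = (Tmat m k n *ᵥ v) i := by
  simp only [mulVec, dotProduct, Fin.sum_univ_castSucc, Tmat_apply, Fin.snoc_castSucc,
    Fin.snoc_last, mul_zero, add_zero, Fin.val_succ, Fin.val_castSucc]
  congr! 3; push_cast; ring

theorem Tmat_mulVec_snoc_zero_zero (v : Fin n → R) :
    (Tmat m (k - 1) (n + 1) *ᵥ Fin.snoc v 0) 0 = (fun j : Fin n => m (k - 1 - j)) ⬝ᵥ v := by
  simp [mulVec, dotProduct, Fin.sum_univ_castSucc, Tmat_apply]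

theorem Tmat_mulVec_cons_zero_succ (v : Fin n → R) (i : Fin n) :
    (Tmat m k (n + 1) *ᵥ vecCons 0 v) i.succ = (Tmat m k n *ᵥ v) i := by
  simp only [mulVec, dotProduct, Fin.sum_univ_succ, Tmat_apply, cons_val_zero, cons_val_succ,
    mul_zero, zero_add, Fin.val_succ]
  congr! 3; push_cast; ring

theorem Tmat_mulVec_cons_zero_zero (v : Fin n → R) :
    (Tmat m k (n + 1) *ᵥ vecCons 0 v) 0 = (fun j : Fin n => m (k - 1 - j)) ⬝ᵥ v := by
  simp only [mulVec, dotProduct, Fin.sum_univ_succ, Tmat_apply, cons_val_zero, cons_val_succ,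
    mul_zero, zero_add, Fin.val_succ, Fin.val_zero]
  congr! 3; push_cast; ring

theorem Tmat_succ_mulVec_castSucc (v : Fin (n + 1) → R) (i : Fin n) :
    (Tmat m (k + 1) (n + 1) *ᵥ v) i.castSucc = (Tmat m k (n + 1) *ᵥ v) i.succ := by
  simp only [mulVec, dotProduct, Tmat_apply, Fin.val_castSucc, Fin.val_succ]
  congr! 3; push_cast; ring

variable (n)

theorem Qs_neg_self : Qs m k n (-n) = 1 := by
  simp [Qs]

theorem Qs_eq_zero {e : ℤ} (he : e < -n ∨ 0 < e) : Qs m k n e = 0 := by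
  have h1 : e ≠ -(n : ℤ) := by omega
  have h2 : ¬(-(n : ℤ) < e ∧ e ≤ 0) := by omega
  simp [Qs, h1, h2]

noncomputable def qVec : Fin (n + 1) → R := fun j => Qs m k n (-j)

-- The coefficients of the left partner of `(Q_n^{(k)})*`.
noncomputable def hVec : Fin (n + 1) → R :=
  Fin.snoc (-((fun j : Fin n => m (k + n - j)) ᵥ* Ring.inverse (Tmat m k n))) 1

theorem qVec_eq_snoc :
    qVec m k n = Fin.snoc (-(Ring.inverse (Tmat m k n) *ᵥ fun l => m (k - n + l))) 1 := by
  ext j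
  refine Fin.lastCases ?_ (fun j => ?_) j
  · simp [qVec, Qs]
  · have hj : -((j : ℕ) : ℤ) ≠ -(n : ℤ) := by omega
    have hj' : -(n : ℤ) < -((j : ℕ) : ℤ) ∧ -((j : ℕ) : ℤ) ≤ 0 := by omega
    simp only [qVec, Qs, Fin.val_castSucc, hj, hj', if_false, Fin.snoc_castSucc]
    simp [mulVec, dotProduct]

theorem qVec_last : qVec m k n (Fin.last n) = 1 := by
  simp [qVec, Qs]

theorem Gq_sub_one_eq_dotProduct_qVec :
    Gq m n (k - 1) = (fun j : Fin (n + 1) => m (k - 1 - j)) ⬝ᵥ qVec m k n := by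
  rw [qVec_eq_snoc]
  simp [Gq, dotProduct, Fin.sum_univ_castSucc, mulVec, Finset.mul_sum, mul_assoc, sub_eq_neg_add]

variable {m k n}

theorem Tmat_mulVec_qVec (hT : IsUnit (Tmat m k n)) :
    Tmat m k (n + 1) *ᵥ qVec m k n = Pi.single (Fin.last n) (Hq m n k) := by
  ext i
  rw [qVec_eq_snoc]
  refine Fin.lastCases ?_ (fun i => ?_) i
  · simp [mulVec, dotProduct, Fin.sum_univ_castSucc, Hq, Tmat_apply, Finset.mul_sum, mul_assoc]
    abel
  · have hb := congrFun (mulVec_mulVec (fun l : Fin n => m (k - n + l)) (Tmat m k n)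
      (Ring.inverse (Tmat m k n))) i
    rw [Ring.mul_inverse_cancel _ hT, one_mulVec] at hb
    simp only [mulVec, dotProduct, Tmat_apply] at hb
    simp [mulVec, dotProduct, Fin.sum_univ_castSucc, Tmat_apply, hb, neg_add_eq_zero]
    congr 1; ring

theorem hVec_vecMul_Tmat (hT : IsUnit (Tmat m k n)) :
    hVec m k n ᵥ* Tmat m k (n + 1) = Pi.single (Fin.last n) (Hq m n k) := by
  ext j
  refine Fin.lastCases ?_ (fun j => ?_) j
  · simp [hVec, vecMul, dotProduct, Fin.sum_univ_castSucc, Hq, Tmat_apply, Finset.sum_mul,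
      mul_assoc, add_sub_right_comm k]
    rw [Finset.sum_comm, neg_add_eq_sub]
  · have ha := congrFun (vecMul_vecMul (fun l : Fin n => m (k + n - l))
      (Ring.inverse (Tmat m k n)) (Tmat m k n)) j
    rw [Ring.inverse_mul_cancel _ hT, vecMul_one] at ha
    simp only [vecMul, dotProduct, Tmat_apply] at ha
    simp [hVec, vecMul, dotProduct, Fin.sum_univ_castSucc, Tmat_apply, ha]

theorem Tmat_mulVec_cons_zero_qVec (hT : IsUnit (Tmat m k n)) :
    Tmat m k (n + 2) *ᵥ vecCons 0 (qVec m k n) =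
      vecCons (Gq m n (k - 1)) (Pi.single (Fin.last n) (Hq m n k)) := by
  ext i
  refine Fin.cases ?_ (fun i => ?_) i
  · rw [Tmat_mulVec_cons_zero_zero, Gq_sub_one_eq_dotProduct_qVec, cons_val_zero]
  · rw [Tmat_mulVec_cons_zero_succ, Tmat_mulVec_qVec hT, cons_val_succ]

theorem Tmat_mulVec_snoc_qVec_zero (hT : IsUnit (Tmat m k n)) :
    Tmat m (k - 1) (n + 2) *ᵥ Fin.snoc (qVec m k n) 0 =
      vecCons (Gq m n (k - 1)) (Pi.single (Fin.last n) (Hq m n k)) := by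
  ext i
  refine Fin.cases ?_ (fun i => ?_) i
  · rw [Tmat_mulVec_snoc_zero_zero, Gq_sub_one_eq_dotProduct_qVec, cons_val_zero]
  · rw [Tmat_mulVec_snoc_zero_succ, Tmat_mulVec_qVec hT, cons_val_succ]

end Toeplitz

section Flow

variable {R : Type*} [DivisionRing R] {m : ℤ → R} {D : R →+ R} {k : ℤ} {n : ℕ}

theorem Tmat_map (hm : ∀ j, D (m j) = m (j + 1)) : (Tmat m k n).map D = Tmat m (k + 1) n := by
  ext i j; simp only [map_apply, Tmat_apply, hm]; congr 1; ring

theorem Tmat_mulVec_init_map_qVec (hD : ∀ a b, D (a * b) = D a * b + a * D b)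
    (hm : ∀ j, D (m j) = m (j + 1)) (hT : IsUnit (Tmat m k (n + 1))) :
    Tmat m k (n + 1) *ᵥ Fin.init (fun j => D (qVec m k (n + 1) j)) =
      Pi.single (Fin.last n) (-Hq m (n + 1) k) := by
  ext i
  -- Differentiate row `i < n + 1` of `T_{n+2}^{(k)} q = H e_{n+1}`; the last entry of `D q` is
  -- `D 1 = 0`.
  have h := map_mulVec_of_leibniz D hD (Tmat m k (n + 2)) (qVec m k (n + 1)) i.castSucc
  rw [Tmat_mulVec_qVec hT, Tmat_map hm, Tmat_succ_mulVec_castSucc, Tmat_mulVec_qVec hT,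
    ← Fin.snoc_init_self fun j => D (qVec m k (n + 1) j), qVec_last,
    map_one_of_leibniz D hD, Tmat_mulVec_snoc_zero_castSucc] at h
  have hsucc : (Pi.single (Fin.last (n + 1)) (Hq m (n + 1) k) : Fin (n + 2) → R) i.succ =
      (Pi.single (Fin.last n) (Hq m (n + 1) k) : Fin (n + 1) → R) i := by
    simp [Pi.single_apply, Fin.ext_iff]
  rw [Pi.single_eq_of_ne (Fin.castSucc_ne_last i), map_zero, hsucc] at h
  rw [Pi.single_neg, Pi.neg_apply, eq_neg_iff_add_eq_zero, add_comm, h]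

theorem map_Qs_succ (hD : ∀ a b, D (a * b) = D a * b + a * D b)
    (hm : ∀ j, D (m j) = m (j + 1)) (hT : IsUnit (Tmat m k (n + 1)))
    (hT' : IsUnit (Tmat m k n)) (hH : Hq m n k ≠ 0) (r : ℤ) :
    D (Qs m k (n + 1) r) = Qs m k n r * ((Hq m n k)⁻¹ * -Hq m (n + 1) k) := by
  by_cases hr : -(n : ℤ) ≤ r ∧ r ≤ 0
  · obtain ⟨j, rfl⟩ : ∃ j : Fin (n + 1), r = -(j : ℤ) :=
      ⟨⟨(-r).toNat, by omega⟩, by simp only; omega⟩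
    have := eq_mul_of_mulVec_eq_single hT (Tmat_mulVec_init_map_qVec hD hm hT)
      (Tmat_mulVec_qVec hT') hH j
    simpa [qVec, Fin.init] using this
  · rcases eq_or_ne r (-((n + 1 : ℕ) : ℤ)) with rfl | hr'
    · rw [Qs_neg_self, map_one_of_leibniz D hD, Qs_eq_zero _ _ _ (by omega), zero_mul]
    · rw [Qs_eq_zero _ _ _ (by omega), Qs_eq_zero _ _ _ (by omega), map_zero, zero_mul]

end Flow

section QuasiDeterminant

variable {R : Type*} [DivisionRing R] {m : ℤ → R} {k : ℤ} {n : ℕ}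

theorem Hq_succ_sub_one (hT : IsUnit (Tmat m (k - 1) (n + 1))) (hT₀ : IsUnit (Tmat m k n))
    (hT₁ : IsUnit (Tmat m (k - 1) n)) (hG : Gq m n (k - 1) ≠ 0) :
    Hq m (n + 1) (k - 1) =
      Hq m n (k - 1) - Hq m n k * (Gq m n (k - 1))⁻¹ * Gq m n (k - 1 - 1) := by
  set h := hVec m (k - 1) (n + 1)
  have hh : vecTail h (Fin.last n) = 1 := by simp [h, hVec, vecTail]
  have hpair : ∀ v, h ⬝ᵥ (Tmat m (k - 1) (n + 2) *ᵥ v) =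
      Hq m (n + 1) (k - 1) * v (Fin.last _) := fun v => by
    rw [dotProduct_mulVec, hVec_vecMul_Tmat hT, single_dotProduct]
  have hq := hpair (vecCons 0 (qVec m (k - 1) n))
  rw [Tmat_mulVec_cons_zero_qVec hT₁, dotProduct_cons, dotProduct_single, hh, ← Fin.succ_last,
    cons_val_succ, qVec_last] at hq
  have ht := hpair (Fin.snoc (qVec m k n) 0)
  rw [Tmat_mulVec_snoc_qVec_zero hT₀, dotProduct_cons, dotProduct_single, hh,
    Fin.snoc_last] at ht
  have hhead : vecHead h = -Hq m n k * (Gq m n (k - 1))⁻¹ := by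
    rw [eq_mul_inv_iff_mul_eq₀ hG]
    simpa [add_eq_zero_iff_eq_neg] using ht
  rw [← mul_one (Hq m (n + 1) (k - 1)), ← hq, hhead]
  simp [sub_eq_add_neg, add_comm]

theorem psi_sub_phi (hT : IsUnit (Tmat m (k - 1) (n + 1))) (hT₀ : IsUnit (Tmat m k n))
    (hT₁ : IsUnit (Tmat m (k - 1) n)) (hG : Gq m n (k - 1) ≠ 0) (hH : Hq m n k ≠ 0) :
    psi m n k - phi m n (k - 1) = (Hq m n k)⁻¹ * Hq m (n + 1) (k - 1) := by
  rw [psi, phi, Hq_succ_sub_one hT hT₀ hT₁ hG, mul_sub, ← mul_assoc, ← mul_assoc,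
    inv_mul_cancel₀ hH, one_mul]

theorem neg_psi_sub_phi_mul_inv_psi (hT : IsUnit (Tmat m (k - 1) (n + 1)))
    (hT₀ : IsUnit (Tmat m k n)) (hT₁ : IsUnit (Tmat m (k - 1) n)) (hG : Gq m n (k - 1) ≠ 0)
    (hH : Hq m n k ≠ 0) (hH' : Hq m (n + 1) (k - 1) ≠ 0) :
    -(psi m n k - phi m n (k - 1)) * (psi m (n + 1) k)⁻¹ =
      (Hq m n k)⁻¹ * -Hq m (n + 1) k := by
  rw [psi_sub_phi hT hT₀ hT₁ hG hH, psi, _root_.mul_inv_rev, inv_inv, neg_mul, mul_assoc,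
    mul_inv_cancel_left₀ hH', mul_neg]

end QuasiDeterminant

theorem stmt_19_general {R : Type*} [DivisionRing R] (m : ℤ → R) (D : R → R)
    (hD_add : ∀ a b : R, D (a + b) = D a + D b)
    (hD_mul : ∀ a b : R, D (a * b) = D a * b + a * D b)
    (hm : ∀ j : ℤ, D (m j) = m (j + 1))
    (n : ℕ) (hn : 1 ≤ n)
    (hT1 : IsUnit (Tmat m 0 n))
    (hT2 : IsUnit (Tmat m (-1) n))
    (hT3 : IsUnit (Tmat m 0 (n - 1)))
    (hT4 : IsUnit (Tmat m (-1) (n - 1)))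
    (hH2 : Hq m n (-1) ≠ 0)
    (hH3 : Hq m (n - 1) 0 ≠ 0)
    (hG1 : Gq m (n - 1) (-1) ≠ 0) :
    ∀ r : ℤ,
      D (Qs m 0 n r)
        = Qs m 0 (n - 1) r *
            (-(psi m (n - 1) 0 - phi m (n - 1) (-1)) * (psi m n 0)⁻¹) := by
  obtain ⟨n, rfl⟩ : ∃ n', n = n' + 1 := ⟨n - 1, by omega⟩
  rw [Nat.add_sub_cancel] at hT3 hT4 hH3 hG1 ⊢
  have heta := neg_psi_sub_phi_mul_inv_psi (k := 0) (by simpa using hT2) hT3 (by simpa using hT4)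
    (by simpa using hG1) hH3 (by simpa using hH2)
  rw [zero_sub] at heta
  intro r
  rw [heta]
  exact map_Qs_succ (D := AddMonoidHom.mk' D hD_add) hD_mul hm hT1 hT3 hH3 r

/-- Positive time flow of non-commutative Laurent bi-orthogonal polynomials: if `D` is a
derivation with `D(m_j) = m_{j+1}`, then `∂_t (Q_n^{(0)})* = (Q_{n−1}^{(0)})*·η_n` with
`η_n = −ξ_{n−1}·(ψ_n^{(0)})⁻¹` and `ξ_{n−1} = ψ_{n−1}^{(0)} − φ_{n−1}^{(−1)}`,
coefficientwise. -/
theorem stmt_19 {R : Type*} [DivisionRing R] (m : ℤ → R) (D : R → R)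
    (hD_add : ∀ a b : R, D (a + b) = D a + D b)
    (hD_mul : ∀ a b : R, D (a * b) = D a * b + a * D b)
    (hm : ∀ j : ℤ, D (m j) = m (j + 1))
    (n : ℕ) (hn : 1 ≤ n)
    (hT1 : IsUnit (Tmat m 0 n))
    (hT2 : IsUnit (Tmat m (-1) n))
    (hT3 : IsUnit (Tmat m 0 (n - 1)))
    (hT4 : IsUnit (Tmat m (-1) (n - 1)))
    (hH1 : Hq m n 0 ≠ 0)
    (hH2 : Hq m n (-1) ≠ 0)
    (hH3 : Hq m (n - 1) 0 ≠ 0)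
    (hH4 : Hq m (n - 1) (-1) ≠ 0)
    (hG1 : Gq m (n - 1) (-1) ≠ 0)
    (hG2 : Gq m (n - 1) (-2) ≠ 0) :
    ∀ r : ℤ,
      D (Qs m 0 n r)
        = Qs m 0 (n - 1) r *
            (-(psi m (n - 1) 0 - phi m (n - 1) (-1)) * (psi m n 0)⁻¹) :=
  stmt_19_general m D hD_add hD_mul hm n hn hT1 hT2 hT3 hT4 hH2 hH3 hG1
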